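/- arXiv:1912.12280 — 6 statements merged into one kernel-verified Lean document; each statement's English description precedes it below -/
import Mathlib

section
/- The simultaneous-conjugation action of A₅ on the set P = {(g₁,g₂) ∈ A₅ × A₅ : orderOf g₁ = 3 and orderOf g₂ = 2} is free: if a ∈ A₅ satisfies a g₁ a⁻¹ = g₁ and a g₂ a⁻¹ = g₂ for some (g₁,g₂) ∈ P, then a = 1. -/
/-!
A 3-cycle `g` in `S₅` has centralizer of order `2! · 3 = 6`, which contains the odd permutation
fixing the support of `g` and swapping the other two points. So the centralizer of `g` in `A₅`
has order 3, i.e. it is `⟨g⟩`. If `a ≠ 1` centralizes both `g₁` and `g₂`, then `a` generates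
`⟨g₁⟩`, so `g₂` commutes with `g₁` and lies in `⟨g₁⟩`, which is impossible for an involution.
-/

open Subgroup Equiv Equiv.Perm

theorem eq_one_of_commute_of_centralizer_eq_zpowers {G : Type*} [Group G] {a g h : G}
    (hcent : centralizer {g} = zpowers g) (hg : (orderOf g).Prime) (hh : ¬ orderOf h ∣ orderOf g)
    (hag : Commute a g) (hah : Commute a h) : a = 1 := by
  by_contra ha
  have ha_mem : a ∈ zpowers g := hcent ▸ mem_centralizer_singleton_iff.mpr hag
  have horder : orderOf a = orderOf g :=
    (hg.eq_one_or_self_of_dvd _ (orderOf_dvd_of_mem_zpowers ha_mem)).resolve_left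
      (by rwa [orderOf_eq_one_iff])
  have : Finite (zpowers g) :=
    Nat.finite_of_card_ne_zero (by rw [Nat.card_zpowers]; exact hg.ne_zero)
  have hzpowers : zpowers a = zpowers g :=
    eq_of_le_of_card_ge (zpowers_le.mpr ha_mem) (by rw [Nat.card_zpowers, Nat.card_zpowers, horder])
  obtain ⟨k, hk⟩ := mem_zpowers_iff.mp (hzpowers ▸ mem_zpowers g)
  have hhg : Commute h g := hk ▸ hah.symm.zpow_right k
  exact hh (orderOf_dvd_of_mem_zpowers (hcent ▸ mem_centralizer_singleton_iff.mpr hhg))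

variable {α : Type*} [Fintype α] [DecidableEq α]

theorem Equiv.Perm.cycleType_eq_singleton_three_of_orderOf_eq_three (hα : Fintype.card α < 6)
    {σ : Perm α} (hσ : orderOf σ = 3) : σ.cycleType = {3} := by
  obtain ⟨n, hn⟩ := cycleType_prime_order (hσ ▸ Nat.prime_three)
  rw [hσ] at hn
  have hsum := sum_cycleType_le σ
  rw [hn, Multiset.sum_replicate, smul_eq_mul] at hsum
  obtain rfl : n = 0 := by omega
  exact hn

theorem alternatingGroup.centralizer_eq_zpowers_of_orderOf_eq_three (hα : Fintype.card α = 5)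
    {g : alternatingGroup α} (hg : orderOf g = 3) : centralizer {g} = zpowers g := by
  set C := centralizer {(g : Perm α)}
  have hcycle : (g : Perm α).cycleType = {3} :=
    cycleType_eq_singleton_three_of_orderOf_eq_three (by omega) (by rwa [orderOf_coe])
  have hC : Nat.card C = 6 := by rw [nat_card_centralizer, hcycle, hα]; simp
  have hCA : ¬ C ≤ alternatingGroup α := by rw [centralizer_le_alternating_iff, hcycle, hα]; simp
  have hle : zpowers (g : Perm α) ≤ C ⊓ alternatingGroup α :=
    le_inf (zpowers_le.mpr (mem_centralizer_singleton_iff.mpr rfl)) (zpowers_le.mpr g.2)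
  have hcard : Nat.card (C ⊓ alternatingGroup α : Subgroup (Perm α)) = 3 := by
    have h3 := card_dvd_of_le hle
    rw [Nat.card_zpowers, orderOf_coe, hg] at h3
    have h6 := Nat.le_of_dvd (by omega)
      (hC ▸ card_dvd_of_le (inf_le_left (b := alternatingGroup α)))
    have hne : Nat.card (C ⊓ alternatingGroup α : Subgroup (Perm α)) ≠ 6 := fun h ↦
      hCA (inf_eq_left.mp (eq_of_le_of_card_ge inf_le_left (by rw [h, hC])))
    have hpos := Nat.card_pos (α := (C ⊓ alternatingGroup α : Subgroup (Perm α)))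
    omega
  have hzpowers : zpowers (g : Perm α) = C ⊓ alternatingGroup α :=
    eq_of_le_of_card_ge hle (by rw [hcard, Nat.card_zpowers, orderOf_coe, hg])
  refine le_antisymm (fun a ha ↦ ?_) (zpowers_le.mpr (mem_centralizer_singleton_iff.mpr rfl))
  have haC : (a : Perm α) ∈ C :=
    mem_centralizer_singleton_iff.mpr (congrArg Subtype.val (mem_centralizer_singleton_iff.mp ha))
  obtain ⟨k, hk⟩ := mem_zpowers_iff.mp (hzpowers ▸ ⟨haC, a.2⟩ : (a : Perm α) ∈ zpowers g.1)
  exact mem_zpowers_iff.mpr ⟨k, Subtype.ext (by rw [← hk]; rfl)⟩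

/-- The simultaneous-conjugation action of `A₅` on the set
`P = {(g₁, g₂) ∈ A₅ × A₅ : orderOf g₁ = 3, orderOf g₂ = 2}` is free: if `a ∈ A₅`
fixes some such pair by conjugation, then `a = 1`. -/
theorem a5_conj_action_on_order3_order2_pairs_free
    (a g₁ g₂ : alternatingGroup (Fin 5))
    (h₁ : orderOf g₁ = 3) (h₂ : orderOf g₂ = 2)
    (ha₁ : a * g₁ * a⁻¹ = g₁) (ha₂ : a * g₂ * a⁻¹ = g₂) : a = 1 :=
  eq_one_of_commute_of_centralizer_eq_zpowers
    (alternatingGroup.centralizer_eq_zpowers_of_orderOf_eq_three (Fintype.card_fin 5) h₁)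
    (h₁ ▸ Nat.prime_three) (by rw [h₁, h₂]; norm_num)
    (mul_inv_eq_iff_eq_mul.mp ha₁) (mul_inv_eq_iff_eq_mul.mp ha₂)
end

section
/- The simultaneous-conjugation action of A₅ on the set P = {(g₁,g₂) ∈ A₅ × A₅ : orderOf g₁ = 3 and orderOf g₂ = 2} has exactly 5 orbits; equivalently, the quotient of P by this action has cardinality 5 (and P itself has 300 elements). -/
/-- The set `P = {(g₁, g₂) ∈ A₅ × A₅ : orderOf g₁ = 3, orderOf g₂ = 2}`. -/
def PairsA5 : Set (alternatingGroup (Fin 5) × alternatingGroup (Fin 5)) :=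
  {p | orderOf p.1 = 3 ∧ orderOf p.2 = 2}

/-- The orbit relation on `PairsA5` for the simultaneous-conjugation action of `A₅`. -/
def PairsA5.conjRel (p q : PairsA5) : Prop :=
  ∃ a : alternatingGroup (Fin 5), (a * p.1.1 * a⁻¹, a * p.1.2 * a⁻¹) = q.1

/-!
In `A₅` the centralizer of an element of order `3` is the cyclic group it generates, so no
involution commutes with an element of order `3`. Hence an element fixing a pair `(g, h) ∈ P`
under conjugation commutes with `g`, so has order `1` or `3`, and commutes with `h`, so it is
trivial: the action is free. There are `20` elements of order `3` and `15` of order `2`, so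
`|P| = 300`, and a free action of the group of order `60` on it has `300 / 60 = 5` orbits.
-/

open MulAction

section PairsOfOrder

variable {G : Type*} [Group G]

theorem ConjAct.smul_eq_self_iff_commute (c : ConjAct G) (g : G) :
    c • g = g ↔ Commute (ConjAct.ofConjAct c) g := by
  rw [ConjAct.smul_def, mul_inv_eq_iff_eq_mul]
  rfl

variable (G) in
def pairsOfOrder (m n : ℕ) : SubMulAction (ConjAct G) (G × G) where
  carrier := {p | orderOf p.1 = m ∧ orderOf p.2 = n}
  smul_mem' c p (hp : orderOf p.1 = m ∧ orderOf p.2 = n) := by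
    show orderOf (c • p).1 = m ∧ orderOf (c • p).2 = n
    simpa only [Prod.smul_fst, Prod.smul_snd, ConjAct.smul_eq_mulAut_conj, MulEquiv.orderOf_eq]

theorem nat_card_pairsOfOrder (m n : ℕ) :
    Nat.card (pairsOfOrder G m n) =
      Nat.card {g : G | orderOf g = m} * Nat.card {g : G | orderOf g = n} :=
  (Nat.card_congr (Equiv.Set.prod {g : G | orderOf g = m} {g : G | orderOf g = n})).trans
    (Nat.card_prod _ _)

theorem stabilizer_pairsOfOrder_eq_bot {p q : ℕ} [Fact p.Prime] (hqp : ¬ q ∣ p)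
    (hcomm : ∀ g a : G, orderOf g = p → Commute a g → a ^ p = 1)
    (x : pairsOfOrder G p q) : stabilizer (ConjAct G) x = ⊥ := by
  refine (Subgroup.eq_bot_iff_forall _).mpr fun c hc => ?_
  have hfix : c • (x : G × G) = x := by rw [← SubMulAction.val_smul, mem_stabilizer_iff.mp hc]
  obtain ⟨hcg, hch⟩ := Prod.ext_iff.mp hfix
  rw [Prod.smul_fst, ConjAct.smul_eq_self_iff_commute] at hcg
  rw [Prod.smul_snd, ConjAct.smul_eq_self_iff_commute] at hch
  obtain ⟨hg, hh⟩ := x.2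
  by_contra hc1
  have hc : orderOf (ConjAct.ofConjAct c) = p :=
    orderOf_eq_prime (hcomm _ _ hg hcg) (by simpa using hc1)
  exact hqp (hh ▸ orderOf_dvd_of_pow_eq_one (hcomm _ _ hc hch.symm))

end PairsOfOrder

local notation "A₅" => alternatingGroup (Fin 5)

namespace alternatingGroup

theorem nat_card_fin_five : Nat.card A₅ = 60 := by
  rw [Nat.card_eq_fintype_card, card_alternatingGroup]
  rfl

theorem nat_card_orderOf_eq_three : Nat.card {g : A₅ | orderOf g = 3} = 20 := by
  simp only [orderOf_eq_prime_iff, Set.coe_ofPred, Nat.card_eq_fintype_card]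
  decide

theorem nat_card_orderOf_eq_two : Nat.card {g : A₅ | orderOf g = 2} = 15 := by
  simp only [orderOf_eq_prime_iff, Set.coe_ofPred, Nat.card_eq_fintype_card]
  decide

set_option maxRecDepth 100000 in
theorem pow_three_eq_one_of_commute_of_orderOf_eq_three {g a : A₅} (hg : orderOf g = 3)
    (hag : Commute a g) : a ^ 3 = 1 := by
  suffices ∀ g : A₅, g ^ 3 = 1 → g ≠ 1 → ∀ a : A₅, a * g = g * a → a ^ 3 = 1 from
    this g (orderOf_eq_prime_iff.mp hg).1 (orderOf_eq_prime_iff.mp hg).2 a hag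
  decide

end alternatingGroup

namespace PairsA5

theorem nat_card : Nat.card PairsA5 = 300 := by
  rw [show Nat.card PairsA5 = Nat.card (pairsOfOrder A₅ 3 2) from rfl, nat_card_pairsOfOrder,
    alternatingGroup.nat_card_orderOf_eq_three, alternatingGroup.nat_card_orderOf_eq_two]

theorem nat_card_quot_conjRel :
    Nat.card (Quot conjRel) = Nat.card (orbitRel.Quotient (ConjAct A₅) (pairsOfOrder A₅ 3 2)) := by
  refine Nat.card_congr (Quot.congr (Equiv.subtypeEquivRight fun _ => Iff.rfl) fun p q => ?_)
  rw [Setoid.comm', orbitRel_apply, mem_orbit_iff, ConjAct.toConjAct.surjective.exists]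
  exact exists_congr fun a => by rw [Subtype.ext_iff]; rfl

theorem nat_card_eq_nat_card_quot_conjRel_mul :
    Nat.card PairsA5 = Nat.card (Quot conjRel) * 60 := by
  have hfree := stabilizer_pairsOfOrder_eq_bot (q := 2) (by decide)
    fun _ _ => alternatingGroup.pow_three_eq_one_of_commute_of_orderOf_eq_three
  calc Nat.card PairsA5 = Nat.card (pairsOfOrder A₅ 3 2) := rfl
    _ = Nat.card (orbitRel.Quotient (ConjAct A₅) (pairsOfOrder A₅ 3 2)) * Nat.card (ConjAct A₅) :=
      (Nat.card_congr (selfEquivOrbitsQuotientProd hfree)).trans (Nat.card_prod _ _)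
    _ = Nat.card (Quot conjRel) * 60 := by
      rw [nat_card_quot_conjRel, Nat.card_congr ConjAct.ofConjAct.toEquiv,
        alternatingGroup.nat_card_fin_five]

end PairsA5

/-- The simultaneous-conjugation action of `A₅` on `P` has exactly `5` orbits,
and `P` itself has `300` elements. -/
theorem a5_conj_action_on_order3_order2_pairs_five_orbits :
    Nat.card (Quot PairsA5.conjRel) = 5 ∧ Nat.card PairsA5 = 300 := by
  have hmul := PairsA5.nat_card_eq_nat_card_quot_conjRel_mul
  rw [PairsA5.nat_card] at hmul
  exact ⟨by omega, PairsA5.nat_card⟩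
end

section
/- For every pair (g₁,g₂) in P = {(g₁,g₂) ∈ A₅ × A₅ : orderOf g₁ = 3 and orderOf g₂ = 2}, the order of the product g₁g₂ lies in {2,3,5}. Moreover the simultaneous-conjugation action of S₅ on P has exactly 3 orbits, and two pairs (g₁,g₂), (g₁′,g₂′) ∈ P lie in the same S₅-orbit if and only if orderOf (g₁g₂) = orderOf (g₁′g₂′). -/
/-- The orbit relation on `PairsA5` for the simultaneous-conjugation action of the full
symmetric group `S₅` (conjugation of elements of `A₅` by a permutation again lands
in `A₅`; we express the relation via the coercions to `S₅`). -/
def PairsA5.s5ConjRel (p q : PairsA5) : Prop :=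
  ∃ s : Equiv.Perm (Fin 5),
    s * (p.1.1 : Equiv.Perm (Fin 5)) * s⁻¹ = (q.1.1 : Equiv.Perm (Fin 5)) ∧
    s * (p.1.2 : Equiv.Perm (Fin 5)) * s⁻¹ = (q.1.2 : Equiv.Perm (Fin 5))

/-!
All 3-cycles of `S₅` are conjugate, so every pair in `P` is conjugate to one with first entry
`(0 1 2)`. Its centralizer `⟨(0 1 2)⟩ × ⟨(3 4)⟩` has three orbits on the fifteen double
transpositions, represented by `(1 2)(3 4)`, `(0 1)(2 3)` and `(1 3)(2 4)`, whose products
with `(0 1 2)` have orders `2`, `3` and `5`. Since the order of `g₁g₂` is a conjugation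
invariant, it separates these three orbits.
-/

open Equiv Equiv.Perm

theorem Nat.card_quot_eq_card_range {α β : Type*} {r : α → α → Prop} (f : α → β)
    (hr : ∀ a b, r a b ↔ f a = f b) : Nat.card (Quot r) = Nat.card (Set.range f) := by
  obtain rfl : r = (Setoid.ker f).r := by ext a b; exact hr a b
  exact Nat.card_congr (Setoid.quotientKerEquivRange f)

theorem orderOf_conj {G : Type*} [Group G] (s x : G) : orderOf (s * x * s⁻¹) = orderOf x :=
  (MulAut.conj s).orderOf_eq x

theorem Equiv.Perm.isThreeCycle_of_orderOf_eq_three {α : Type*} [Fintype α] [DecidableEq α]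
    (hα : Fintype.card α < 6) {σ : Perm α} (hσ : orderOf σ = 3) : σ.IsThreeCycle := by
  have hcycle : σ.IsCycle :=
    isCycle_of_prime_order (hσ ▸ Nat.prime_three)
      (hσ ▸ (Finset.card_le_univ σ.support).trans_lt hα)
  exact card_support_eq_three_iff.mp (hcycle.orderOf ▸ hσ)

theorem Equiv.Perm.isConj_of_orderOf_eq_three {α : Type*} [Fintype α] [DecidableEq α]
    (hα : Fintype.card α < 6) {σ τ : Perm α} (hσ : orderOf σ = 3) (hτ : orderOf τ = 3) :
    IsConj σ τ :=
  isConj_iff_cycleType_eq.mpr <| (isThreeCycle_of_orderOf_eq_three hα hσ).cycleType.trans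
    (isThreeCycle_of_orderOf_eq_three hα hτ).cycleType.symm

theorem orderOf_cycle012 : orderOf (c[0, 1, 2] : Perm (Fin 5)) = 3 :=
  orderOf_eq_prime_iff.mpr (by decide)

namespace PairsA5

def stdInvolution : Fin 3 → Perm (Fin 5) :=
  ![c[1, 2] * c[3, 4], c[0, 1] * c[2, 3], c[1, 3] * c[2, 4]]

def stdOrder : Fin 3 → ℕ := ![2, 3, 5]

theorem stdOrder_injective : Function.Injective stdOrder := by decide

set_option maxRecDepth 10000 in
theorem exists_conj_stdInvolution : ∀ g : Perm (Fin 5), g ^ 2 = 1 → g ≠ 1 → sign g = 1 →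
    ∃ i t, t * c[0, 1, 2] * t⁻¹ = c[0, 1, 2] ∧ t * stdInvolution i * t⁻¹ = g := by
  decide

theorem exists_conj_stdPair {g₁ g₂ : Perm (Fin 5)} (h₁ : orderOf g₁ = 3) (h₂ : orderOf g₂ = 2)
    (hsign : sign g₂ = 1) :
    ∃ i s, s * c[0, 1, 2] * s⁻¹ = g₁ ∧ s * stdInvolution i * s⁻¹ = g₂ := by
  obtain ⟨s, rfl⟩ := isConj_iff.mp (isConj_of_orderOf_eq_three (by simp) orderOf_cycle012 h₁)
  obtain ⟨g, rfl⟩ : ∃ g, g₂ = s * g * s⁻¹ := ⟨s⁻¹ * g₂ * s, by group⟩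
  rw [orderOf_conj, orderOf_eq_prime_iff] at h₂
  obtain ⟨i, t, ht₁, ht₂⟩ :=
    exists_conj_stdInvolution g h₂.1 h₂.2 <| by
      rwa [map_mul, map_mul, mul_right_comm, ← map_mul, mul_inv_cancel, map_one, one_mul] at hsign
  refine ⟨i, s * t, ?_, ?_⟩
  · conv_rhs => rw [← ht₁]
    group
  · rw [← ht₂]
    group

theorem orderOf_stdInvolution (i : Fin 3) : orderOf (stdInvolution i) = 2 :=
  orderOf_eq_prime_iff.mpr (by revert i; decide)

def stdPair (i : Fin 3) : PairsA5 :=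
  ⟨(⟨c[0, 1, 2], mem_alternatingGroup.mpr (by decide)⟩,
      ⟨stdInvolution i, mem_alternatingGroup.mpr (by revert i; decide)⟩),
    (Subgroup.orderOf_mk _ _).trans orderOf_cycle012,
    (Subgroup.orderOf_mk _ _).trans (orderOf_stdInvolution i)⟩

set_option maxRecDepth 10000 in
theorem orderOf_mul_stdPair (i : Fin 3) :
    orderOf ((stdPair i).1.1 * (stdPair i).1.2) = stdOrder i := by
  rw [← Subgroup.orderOf_coe]
  exact (orderOf_eq_prime_iff (hp := ⟨by fin_cases i <;> norm_num [stdOrder]⟩)).mpr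
    (by revert i; decide)

theorem s5ConjRel_equivalence : Equivalence s5ConjRel where
  refl _ := ⟨1, by simp, by simp⟩
  symm := by
    rintro p q ⟨s, h₁, h₂⟩
    exact ⟨s⁻¹, by rw [← h₁]; group, by rw [← h₂]; group⟩
  trans := by
    rintro p q r ⟨s, hs₁, hs₂⟩ ⟨t, ht₁, ht₂⟩
    exact ⟨t * s, by rw [← ht₁, ← hs₁]; group, by rw [← ht₂, ← hs₂]; group⟩

theorem exists_stdPair_s5ConjRel (p : PairsA5) : ∃ i, s5ConjRel (stdPair i) p := by
  obtain ⟨h₁, h₂⟩ := p.2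
  rw [← Subgroup.orderOf_coe] at h₁ h₂
  exact exists_conj_stdPair h₁ h₂ (mem_alternatingGroup.mp p.1.2.2)

theorem orderOf_mul_eq_of_s5ConjRel {p q : PairsA5} (h : s5ConjRel p q) :
    orderOf (p.1.1 * p.1.2) = orderOf (q.1.1 * q.1.2) := by
  obtain ⟨s, h₁, h₂⟩ := h
  rw [← Subgroup.orderOf_coe, ← Subgroup.orderOf_coe, Subgroup.coe_mul, Subgroup.coe_mul, ← h₁,
    ← h₂, conj_mul, orderOf_conj]

theorem s5ConjRel_of_orderOf_mul_eq {p q : PairsA5}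
    (h : orderOf (p.1.1 * p.1.2) = orderOf (q.1.1 * q.1.2)) : s5ConjRel p q := by
  obtain ⟨i, hi⟩ := exists_stdPair_s5ConjRel p
  obtain ⟨j, hj⟩ := exists_stdPair_s5ConjRel q
  obtain rfl : i = j := stdOrder_injective <| by
    rw [← orderOf_mul_stdPair, ← orderOf_mul_stdPair, orderOf_mul_eq_of_s5ConjRel hi,
      orderOf_mul_eq_of_s5ConjRel hj, h]
  exact s5ConjRel_equivalence.trans (s5ConjRel_equivalence.symm hi) hj

theorem range_orderOf_mul :
    Set.range (fun p : PairsA5 ↦ orderOf (p.1.1 * p.1.2)) = {2, 3, 5} := by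
  have : Set.range (fun p : PairsA5 ↦ orderOf (p.1.1 * p.1.2)) = Set.range stdOrder := by
    refine Set.Subset.antisymm (Set.range_subset_iff.mpr fun p ↦ ?_)
      (Set.range_subset_iff.mpr fun i ↦ ⟨stdPair i, orderOf_mul_stdPair i⟩)
    obtain ⟨i, hi⟩ := exists_stdPair_s5ConjRel p
    exact ⟨i, by rw [← orderOf_mul_stdPair, orderOf_mul_eq_of_s5ConjRel hi]⟩
  ext n
  simp only [this, stdOrder, Matrix.range_cons, Matrix.range_empty, Set.union_empty,
    Set.singleton_union, Set.mem_insert_iff, Set.mem_singleton_iff]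

end PairsA5

open PairsA5 in
/-- For every pair `(g₁, g₂) ∈ P` the order of `g₁g₂` lies in `{2, 3, 5}`, the
simultaneous-conjugation action of `S₅` on `P` has exactly `3` orbits, and two pairs
lie in the same `S₅`-orbit iff the products have equal order. -/
theorem s5_orbits_on_order3_order2_pairs :
    (∀ p : PairsA5, orderOf (p.1.1 * p.1.2) ∈ ({2, 3, 5} : Set ℕ)) ∧
    Nat.card (Quot PairsA5.s5ConjRel) = 3 ∧
    (∀ p q : PairsA5,
      PairsA5.s5ConjRel p q ↔ orderOf (p.1.1 * p.1.2) = orderOf (q.1.1 * q.1.2)) := by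
  have hclass : ∀ p q : PairsA5,
      s5ConjRel p q ↔ orderOf (p.1.1 * p.1.2) = orderOf (q.1.1 * q.1.2) :=
    fun _ _ ↦ ⟨orderOf_mul_eq_of_s5ConjRel, s5ConjRel_of_orderOf_mul_eq⟩
  refine ⟨fun p ↦ range_orderOf_mul ▸ Set.mem_range_self p, ?_, hclass⟩
  rw [Nat.card_quot_eq_card_range _ hclass, range_orderOf_mul]
  simp
end

section
/- The quadratic form Q(x₁,x₂,x₃) = 2x₁² + 3x₂² + x₃² − 2x₁x₃ − 3x₂x₃ is anisotropic over ℚ: for every x ∈ ℚ³, Q(x) = 0 implies x = 0. (Equivalently, the conic in the projective plane defined by Q has no rational point.) -/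
/-- The Tits quadratic form of the `(6,4,2)`-triangle group, over `ℚ`. -/
def titsFormQ (x : Fin 3 → ℚ) : ℚ :=
  2 * x 0 ^ 2 + 3 * x 1 ^ 2 + x 2 ^ 2 - 2 * x 0 * x 2 - 3 * x 1 * x 2

/-!
Substituting `a = 2x₁ - x₃`, `b = 2x₂ - x₃`, `c = x₃` gives `4 Q(x) = 2a² + 3b² - c²`, so it
suffices that `u a² + p b² = c²` has no nontrivial rational solution when `p` is prime and `u`
is not a square mod `p` (here `u = 2`, `p = 3`). After clearing denominators this is a descent:
modulo `p` the equation reads `u a² = c²`, forcing `p ∣ a` and `p ∣ c`, hence `p² ∣ p b²`, so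
`p ∣ b` and `(a, b, c) / p` is again a solution. Thus every power of `p` divides a solution.
-/

theorem eq_zero_of_mul_sq_eq_sq_of_not_isSquare {K : Type*} [Field K] {u a c : K}
    (hu : ¬IsSquare u) (h : u * a ^ 2 = c ^ 2) : a = 0 ∧ c = 0 := by
  have ha : a = 0 := by
    by_contra ha
    exact hu ⟨c / a, by field_simp; linear_combination h⟩
  subst ha
  exact ⟨rfl, pow_eq_zero_iff two_ne_zero |>.mp (by simpa using h.symm)⟩

namespace Int

theorem eq_zero_of_forall_pow_dvd {q n : ℤ} (hq : q.natAbs ≠ 1) (h : ∀ k : ℕ, q ^ k ∣ n) :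
    n = 0 := by
  by_contra hn
  obtain ⟨k, hk⟩ := finiteMultiplicity_iff.mpr ⟨hq, hn⟩
  exact hk (h (k + 1))

variable {p : ℕ} [hp : Fact p.Prime] {u : ℤ}

theorem exists_eq_prime_mul_of_mul_sq_add_prime_mul_sq_eq_sq (hu : ¬IsSquare (u : ZMod p))
    {a b c : ℤ} (h : u * a ^ 2 + p * b ^ 2 = c ^ 2) :
    ∃ a' b' c' : ℤ, a = p * a' ∧ b = p * b' ∧ c = p * c' ∧ u * a' ^ 2 + p * b' ^ 2 = c' ^ 2 := by
  have hmod : (u : ZMod p) * (a : ZMod p) ^ 2 = (c : ZMod p) ^ 2 := by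
    simpa using congrArg (Int.cast : ℤ → ZMod p) h
  obtain ⟨ha, hc⟩ := eq_zero_of_mul_sq_eq_sq_of_not_isSquare hu hmod
  obtain ⟨a', rfl⟩ := (ZMod.intCast_zmod_eq_zero_iff_dvd a p).mp ha
  obtain ⟨c', rfl⟩ := (ZMod.intCast_zmod_eq_zero_iff_dvd c p).mp hc
  have hp0 : (p : ℤ) ≠ 0 := by exact_mod_cast hp.out.ne_zero
  have hb : b ^ 2 = p * (c' ^ 2 - u * a' ^ 2) :=
    mul_left_cancel₀ hp0 (by linear_combination h)
  obtain ⟨b', rfl⟩ := (Nat.prime_iff_prime_int.mp hp.out).dvd_of_dvd_pow ⟨_, hb⟩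
  refine ⟨a', b', c', rfl, rfl, rfl, mul_left_cancel₀ (pow_ne_zero 2 hp0) ?_⟩
  linear_combination h

theorem pow_dvd_of_mul_sq_add_prime_mul_sq_eq_sq (hu : ¬IsSquare (u : ZMod p)) (k : ℕ) :
    ∀ {a b c : ℤ}, u * a ^ 2 + p * b ^ 2 = c ^ 2 →
      (p : ℤ) ^ k ∣ a ∧ (p : ℤ) ^ k ∣ b ∧ (p : ℤ) ^ k ∣ c := by
  induction k with
  | zero => simp
  | succ k ih =>
    intro a b c h
    obtain ⟨a', b', c', rfl, rfl, rfl, h'⟩ :=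
      exists_eq_prime_mul_of_mul_sq_add_prime_mul_sq_eq_sq hu h
    obtain ⟨ha, hb, hc⟩ := ih h'
    rw [pow_succ']
    exact ⟨mul_dvd_mul_left _ ha, mul_dvd_mul_left _ hb, mul_dvd_mul_left _ hc⟩

theorem eq_zero_of_mul_sq_add_prime_mul_sq_eq_sq (hu : ¬IsSquare (u : ZMod p))
    {a b c : ℤ} (h : u * a ^ 2 + p * b ^ 2 = c ^ 2) : a = 0 ∧ b = 0 ∧ c = 0 := by
  have hp1 : (p : ℤ).natAbs ≠ 1 := by simpa using hp.out.ne_one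
  have hdvd := fun k ↦ pow_dvd_of_mul_sq_add_prime_mul_sq_eq_sq hu k h
  exact ⟨eq_zero_of_forall_pow_dvd hp1 fun k ↦ (hdvd k).1,
    eq_zero_of_forall_pow_dvd hp1 fun k ↦ (hdvd k).2.1,
    eq_zero_of_forall_pow_dvd hp1 fun k ↦ (hdvd k).2.2⟩

end Int

namespace Rat

theorem exists_nat_mul_eq_intCast (a b c : ℚ) :
    ∃ d : ℕ, d ≠ 0 ∧ ∃ A B C : ℤ, d * a = A ∧ d * b = B ∧ d * c = C :=
  ⟨a.den * b.den * c.den, by positivity, a.num * b.den * c.den, b.num * a.den * c.den,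
    c.num * a.den * b.den, by push_cast; rw [← a.mul_den_eq_num]; ring,
    by push_cast; rw [← b.mul_den_eq_num]; ring, by push_cast; rw [← c.mul_den_eq_num]; ring⟩

theorem eq_zero_of_mul_sq_add_prime_mul_sq_eq_sq {p : ℕ} [Fact p.Prime] {u : ℤ}
    (hu : ¬IsSquare (u : ZMod p)) {a b c : ℚ} (h : u * a ^ 2 + p * b ^ 2 = c ^ 2) :
    a = 0 ∧ b = 0 ∧ c = 0 := by
  obtain ⟨d, hd, A, B, C, hA, hB, hC⟩ := exists_nat_mul_eq_intCast a b c
  have hABC : u * A ^ 2 + p * B ^ 2 = C ^ 2 := by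
    have : ((u * A ^ 2 + p * B ^ 2 : ℤ) : ℚ) = (C ^ 2 : ℤ) := by
      push_cast
      rw [← hA, ← hB, ← hC]
      linear_combination (d : ℚ) ^ 2 * h
    exact_mod_cast this
  obtain ⟨hA0, hB0, hC0⟩ := Int.eq_zero_of_mul_sq_add_prime_mul_sq_eq_sq hu hABC
  have hd' : (d : ℚ) ≠ 0 := by exact_mod_cast hd
  exact ⟨by simpa [hA0, hd'] using hA, by simpa [hB0, hd'] using hB,
    by simpa [hC0, hd'] using hC⟩

end Rat

/-- The quadratic form `Q(x₁,x₂,x₃) = 2x₁² + 3x₂² + x₃² − 2x₁x₃ − 3x₂x₃` is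
anisotropic over `ℚ`: it only represents `0` trivially. -/
theorem titsFormQ_anisotropic (x : Fin 3 → ℚ) (hx : titsFormQ x = 0) : x = 0 := by
  have h : ((2 : ℤ) : ℚ) * (2 * x 0 - x 2) ^ 2 + ((3 : ℕ) : ℚ) * (2 * x 1 - x 2) ^ 2 =
      x 2 ^ 2 := by
    unfold titsFormQ at hx
    push_cast
    linear_combination 4 * hx
  have hu : ¬IsSquare ((2 : ℤ) : ZMod 3) := by decide
  obtain ⟨h0, h1, h2⟩ := Rat.eq_zero_of_mul_sq_add_prime_mul_sq_eq_sq (p := 3) hu h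
  funext i
  fin_cases i <;> simp <;> linarith
end

section
/- Let Q be the quadratic form Q(x₁,x₂,x₃) = 2x₁² + 3x₂² + x₃² − 2x₁x₃ − 3x₂x₃ on ℚ³, and let C(Q) be its Clifford algebra over ℚ. For every element a of the even subalgebra of C(Q), the norm a · reverse(a) lies in the image of ℚ under the structure map (it is a scalar), and if a ≠ 0 then a · reverse(a) ≠ 0. -/
/-!
In the orthogonal basis `e₀ = (1,0,0)`, `e₁ = (0,1,0)`, `e₂ = (1,1,2)` the form is diagonal,
`Q = ⟨2, 3, -1⟩`. The bivectors `i = e₀e₁`, `j = e₁e₂` then satisfy the relations of the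
quaternion algebra `(-6, 3)` over `ℚ`, with `ij = 3e₀e₂`; they generate the even Clifford algebra,
and `reverse` acts on them as quaternion conjugation. Hence `a * reverse a` is the reduced norm
`r² + 6x² - 3y² - 18z²` of a quaternion. This form is anisotropic over `ℚ` by a `3`-adic
descent: in `s² + 6u² = 3v² + 2w²`, reduction mod `3` (where `2` is not a square) gives `3 ∣ s`
and `3 ∣ w`, and then `(v, w/3, s/3, u)` is a solution with `v² + 6(w/3)² = (s² + 6u²)/3`.
-/

open scoped Quaternion

namespace CliffordAlgebra

variable {R M : Type*} [CommRing R] [AddCommGroup M] [Module R M] (Q : QuadraticForm R M)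

theorem ι_mul_ι_mul_self (m : M) (x : CliffordAlgebra Q) : ι Q m * (ι Q m * x) = Q m • x := by
  rw [← mul_assoc, ι_sq_scalar, Algebra.smul_def]

def quaternionBasis (e : Fin 3 → M) (he : ∀ p q, p ≠ q → Q.IsOrtho (e p) (e q)) :
    QuaternionAlgebra.Basis (CliffordAlgebra Q) (-(Q (e 0) * Q (e 1))) 0 (-(Q (e 1) * Q (e 2)))
    where
  i := ι Q (e 0) * ι Q (e 1)
  j := ι Q (e 1) * ι Q (e 2)
  k := Q (e 1) • (ι Q (e 0) * ι Q (e 2))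
  i_mul_i := by
    simp only [mul_assoc, ι_mul_ι_mul_of_isOrtho _ (he 1 0 (by decide)), ι_mul_ι_mul_self,
      ι_sq_scalar, Algebra.algebraMap_eq_smul_one, mul_neg]
    module
  j_mul_j := by
    simp only [mul_assoc, ι_mul_ι_mul_of_isOrtho _ (he 2 1 (by decide)), ι_mul_ι_mul_self,
      ι_sq_scalar, Algebra.algebraMap_eq_smul_one, mul_neg]
    module
  i_mul_j := by
    simp only [mul_assoc, ι_mul_ι_mul_self, mul_smul_comm]
  j_mul_i := by
    simp only [mul_assoc, ι_mul_ι_mul_of_isOrtho _ (he 2 0 (by decide)),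
      ι_mul_ι_comm_of_isOrtho (he 2 1 (by decide)),
      ι_mul_ι_mul_of_isOrtho _ (he 1 0 (by decide)),
      ι_mul_ι_mul_self, mul_neg, neg_neg, mul_smul_comm]
    module

variable {Q} {e : Fin 3 → M} (he : ∀ p q, p ≠ q → Q.IsOrtho (e p) (e q))

theorem reverse_quaternionBasis_liftHom (x : ℍ[R, -(Q (e 0) * Q (e 1)), -(Q (e 1) * Q (e 2))]) :
    reverse ((quaternionBasis Q e he).liftHom x) = (quaternionBasis Q e he).liftHom (star x) := by
  simp only [QuaternionAlgebra.Basis.liftHom_apply, QuaternionAlgebra.Basis.lift, quaternionBasis,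
    map_add, map_smul, reverse.commutes, reverse.map_mul, reverse_ι,
    ι_mul_ι_comm_of_isOrtho (he 1 0 (by decide)), ι_mul_ι_comm_of_isOrtho (he 2 1 (by decide)),
    ι_mul_ι_comm_of_isOrtho (he 2 0 (by decide)), QuaternionAlgebra.re_star,
    QuaternionAlgebra.imI_star, QuaternionAlgebra.imJ_star, QuaternionAlgebra.imK_star, zero_mul,
    map_zero]
  module

theorem quaternionBasis_liftHom_mul_reverse
    (x : ℍ[R, -(Q (e 0) * Q (e 1)), -(Q (e 1) * Q (e 2))]) :
    (quaternionBasis Q e he).liftHom x * reverse ((quaternionBasis Q e he).liftHom x) =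
      algebraMap R _ (x * star x).re := by
  rw [reverse_quaternionBasis_liftHom, ← map_mul]
  conv_lhs => rw [QuaternionAlgebra.mul_star_eq_coe, ← QuaternionAlgebra.coe_algebraMap]
  exact AlgHom.commutes _ _

theorem ι_mul_ι_mem_range_quaternionBasis_liftHom (h1 : IsUnit (Q (e 1))) (p q : Fin 3) :
    ι Q (e p) * ι Q (e q) ∈ (quaternionBasis Q e he).liftHom.range := by
  set B := quaternionBasis Q e he
  have hB : Algebra.adjoin R {B.i, B.j, B.k} ≤ B.liftHom.range := (B.range_liftHom).ge
  have h01 : ι Q (e 0) * ι Q (e 1) ∈ B.liftHom.range :=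
    hB (Algebra.subset_adjoin (Set.mem_insert _ _))
  have h12 : ι Q (e 1) * ι Q (e 2) ∈ B.liftHom.range :=
    hB (Algebra.subset_adjoin (Set.mem_insert_of_mem _ (Set.mem_insert _ _)))
  have h02 : ι Q (e 0) * ι Q (e 2) ∈ B.liftHom.range := by
    have hk : ι Q (e 0) * ι Q (e 2) = (↑h1.unit⁻¹ : R) • B.k := by
      simp [B, quaternionBasis, smul_smul]
    exact hk ▸ Subalgebra.smul_mem _ (hB (Algebra.subset_adjoin (by simp))) _
  have hlt : ∀ p q : Fin 3, p < q → ι Q (e p) * ι Q (e q) ∈ B.liftHom.range := by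
    intro p q hpq
    fin_cases p <;> fin_cases q <;> simp at hpq <;> assumption
  rcases lt_trichotomy p q with hpq | rfl | hpq
  · exact hlt p q hpq
  · rw [ι_sq_scalar]; exact Subalgebra.algebraMap_mem _ _
  · rw [ι_mul_ι_comm_of_isOrtho (he p q hpq.ne')]; exact neg_mem (hlt q p hpq)

theorem even_le_range_quaternionBasis_liftHom (hspan : ⊤ ≤ Submodule.span R (Set.range e))
    (h1 : IsUnit (Q (e 1))) : even Q ≤ (quaternionBasis Q e he).liftHom.range := by
  have hι : ∀ m₁ m₂, ι Q m₁ * ι Q m₂ ∈ (quaternionBasis Q e he).liftHom.range := by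
    intro m₁ m₂
    obtain ⟨c, rfl⟩ :=
      (Submodule.mem_span_range_iff_exists_fun R).mp (hspan (Submodule.mem_top (x := m₁)))
    obtain ⟨d, rfl⟩ :=
      (Submodule.mem_span_range_iff_exists_fun R).mp (hspan (Submodule.mem_top (x := m₂)))
    simp only [map_sum, map_smul, Finset.sum_mul, Finset.mul_sum, smul_mul_smul_comm]
    exact Subalgebra.sum_mem _ fun p _ => Subalgebra.sum_mem _ fun q _ =>
      Subalgebra.smul_mem _ (ι_mul_ι_mem_range_quaternionBasis_liftHom he h1 q p) _
  intro a ha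
  rw [← Subalgebra.mem_toSubmodule, even_toSubmodule] at ha
  induction a, ha using even_induction with
  | algebraMap r => exact Subalgebra.algebraMap_mem _ r
  | add x y _ _ hx hy => exact add_mem hx hy
  | ι_mul_ι_mul m₁ m₂ x _ hx => exact mul_mem (hι m₁ m₂) hx

end CliffordAlgebra

theorem ZMod.eq_zero_of_sq_eq_two_mul_sq :
    ∀ a b : ZMod 3, a ^ 2 = 2 * b ^ 2 → a = 0 ∧ b = 0 := by
  decide

theorem Int.three_dvd_of_sq_add_six_mul_sq_eq {s u v w : ℤ}
    (h : s ^ 2 + 6 * u ^ 2 = 3 * v ^ 2 + 2 * w ^ 2) : 3 ∣ s ∧ 3 ∣ w := by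
  have h3 : (s : ZMod 3) ^ 2 = 2 * (w : ZMod 3) ^ 2 := by
    have := congrArg (Int.cast : ℤ → ZMod 3) h
    push_cast at this
    reduce_mod_char at this
    exact this
  have := ZMod.eq_zero_of_sq_eq_two_mul_sq _ _ h3
  simp only [ZMod.intCast_zmod_eq_zero_iff_dvd] at this
  exact_mod_cast this

theorem Int.eq_zero_of_sq_add_six_mul_sq_eq {s u v w : ℤ}
    (h : s ^ 2 + 6 * u ^ 2 = 3 * v ^ 2 + 2 * w ^ 2) : s = 0 ∧ u = 0 ∧ v = 0 ∧ w = 0 := by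
  induction hn : (s ^ 2 + 6 * u ^ 2).toNat using Nat.strong_induction_on generalizing s u v w with
  | _ n ih =>
  rcases (by positivity : 0 ≤ s ^ 2 + 6 * u ^ 2).eq_or_lt with h0 | hpos
  · refine ⟨?_, ?_, ?_, ?_⟩ <;> nlinarith
  · obtain ⟨⟨s, rfl⟩, ⟨w, rfl⟩⟩ := Int.three_dvd_of_sq_add_six_mul_sq_eq h
    have h' : v ^ 2 + 6 * w ^ 2 = 3 * s ^ 2 + 2 * u ^ 2 := by linarith
    have hlt : v ^ 2 + 6 * w ^ 2 < (3 * s) ^ 2 + 6 * u ^ 2 := by nlinarith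
    obtain ⟨rfl, rfl, rfl, rfl⟩ := ih _ (by omega) h' rfl
    simp

theorem Rat.eq_zero_of_sq_add_six_mul_sq_eq {s u v w : ℚ}
    (h : s ^ 2 + 6 * u ^ 2 = 3 * v ^ 2 + 2 * w ^ 2) : s = 0 ∧ u = 0 ∧ v = 0 ∧ w = 0 := by
  obtain ⟨⟨d, hd⟩, hint⟩ :=
    IsLocalization.exist_integer_multiples_of_finite (nonZeroDivisors ℤ) ![s, u, v, w]
  choose z hz using hint
  have hd0 : (d : ℚ) ≠ 0 := by exact_mod_cast nonZeroDivisors.ne_zero hd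
  have hdz : ∀ i, (z i : ℚ) = d * ![s, u, v, w] i := fun i => by simpa using hz i
  have hZ : z 0 ^ 2 + 6 * z 1 ^ 2 = 3 * z 2 ^ 2 + 2 * z 3 ^ 2 := by
    have : (z 0 : ℚ) ^ 2 + 6 * (z 1 : ℚ) ^ 2 = 3 * (z 2 : ℚ) ^ 2 + 2 * (z 3 : ℚ) ^ 2 := by
      simp only [hdz, Matrix.cons_val_zero, Matrix.cons_val_one, Matrix.cons_val]
      linear_combination d ^ 2 * h
    exact_mod_cast this
  have hz0 : ∀ i, z i = 0 := by
    simpa [Fin.forall_fin_succ] using Int.eq_zero_of_sq_add_six_mul_sq_eq hZ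
  have hx : ∀ i, ![s, u, v, w] i = 0 := fun i =>
    (mul_eq_zero.mp ((hdz i).symm.trans (by simp [hz0 i]))).resolve_left hd0
  exact ⟨hx 0, hx 1, hx 2, hx 3⟩

def diagonalizingFrame : Fin 3 → Fin 3 → ℚ := ![![1, 0, 0], ![0, 1, 0], ![1, 1, 2]]

theorem span_diagonalizingFrame : ⊤ ≤ Submodule.span ℚ (Set.range diagonalizingFrame) := by
  intro m _
  refine (Submodule.mem_span_range_iff_exists_fun ℚ).mpr
    ⟨![m 0 - m 2 / 2, m 1 - m 2 / 2, m 2 / 2], ?_⟩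
  ext p
  fin_cases p <;> simp [diagonalizingFrame, Fin.sum_univ_three]

section

variable {Q : QuadraticForm ℚ (Fin 3 → ℚ)}

theorem apply_diagonalizingFrame
    (hQ : ∀ x, Q x = 2 * x 0 ^ 2 + 3 * x 1 ^ 2 + x 2 ^ 2 - 2 * x 0 * x 2 - 3 * x 1 * x 2) :
    Q (diagonalizingFrame 0) = 2 ∧ Q (diagonalizingFrame 1) = 3 ∧
      Q (diagonalizingFrame 2) = -1 := by
  simp [hQ, diagonalizingFrame]
  norm_num

theorem isOrtho_diagonalizingFrame
    (hQ : ∀ x, Q x = 2 * x 0 ^ 2 + 3 * x 1 ^ 2 + x 2 ^ 2 - 2 * x 0 * x 2 - 3 * x 1 * x 2) :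
    ∀ p q, p ≠ q → Q.IsOrtho (diagonalizingFrame p) (diagonalizingFrame q) := by
  intro p q hpq
  fin_cases p <;> fin_cases q <;> simp at hpq <;>
    simp [QuadraticMap.IsOrtho, hQ, diagonalizingFrame] <;> norm_num

end

/-- For the Tits form `Q(x₁,x₂,x₃) = 2x₁² + 3x₂² + x₃² − 2x₁x₃ − 3x₂x₃` over `ℚ`,
the norm `a * reverse a` of any element `a` of the even subalgebra of the Clifford
algebra `C(Q)` is a scalar, and it is nonzero whenever `a ≠ 0`. -/
theorem even_clifford_norm_scalar_and_nonzero
    (Q : QuadraticForm ℚ (Fin 3 → ℚ))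
    (hQ : ∀ x, Q x = 2 * x 0 ^ 2 + 3 * x 1 ^ 2 + x 2 ^ 2 - 2 * x 0 * x 2 - 3 * x 1 * x 2) :
    ∀ a ∈ CliffordAlgebra.even Q,
      (∃ r : ℚ, a * CliffordAlgebra.reverse a = algebraMap ℚ (CliffordAlgebra Q) r) ∧
      (a ≠ 0 → a * CliffordAlgebra.reverse a ≠ 0) := by
  intro a ha
  obtain ⟨hq₀, hq₁, hq₂⟩ := apply_diagonalizingFrame hQ
  have he := isOrtho_diagonalizingFrame hQ
  obtain ⟨x, rfl⟩ := (AlgHom.mem_range _).mp <|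
    CliffordAlgebra.even_le_range_quaternionBasis_liftHom he span_diagonalizingFrame
      (by rw [hq₁]; norm_num) ha
  rw [CliffordAlgebra.quaternionBasis_liftHom_mul_reverse]
  refine ⟨⟨_, rfl⟩, fun hx hnorm => hx ?_⟩
  have hre : x.re ^ 2 + 6 * x.imI ^ 2 - 3 * x.imJ ^ 2 - 18 * x.imK ^ 2 = 0 := by
    have := (algebraMap ℚ (CliffordAlgebra Q)).injective (hnorm.trans (map_zero _).symm)
    simp only [QuaternionAlgebra.re_mul, QuaternionAlgebra.re_star, QuaternionAlgebra.imI_star,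
      QuaternionAlgebra.imJ_star, QuaternionAlgebra.imK_star, hq₀, hq₁, hq₂] at this
    linear_combination this
  obtain ⟨h₀, h₁, h₂, h₃⟩ := Rat.eq_zero_of_sq_add_six_mul_sq_eq
    (s := x.re) (u := x.imI) (v := x.imJ) (w := 3 * x.imK) (by linear_combination hre)
  have hx₀ : x = 0 := by ext <;> simp <;> linarith
  rw [hx₀, map_zero]
end

section
/- Let Q_ℝ be the quadratic form Q(x₁,x₂,x₃) = 2x₁² + 3x₂² + x₃² − 2x₁x₃ − 3x₂x₃ on ℝ³ (a form of signature (2,1)). Then the even Clifford algebra of Q_ℝ is isomorphic as an ℝ-algebra to the algebra of 2×2 real matrices: there exists an ℝ-algebra isomorphism (CliffordAlgebra.even Q_ℝ) ≃ Matrix (Fin 2) (Fin 2) ℝ. In other words, C₊(Q) is a quaternion algebra of indefinite type. -/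
/-!
Completing squares, `Q = (x₂ - x₀ - 3/2 x₁)² + (x₀ - 3/2 x₁)² - 3/2 x₁²`, so over `ℝ` the form
`Q` is isometric to `q ⊕ ⟨-1⟩` with `q(u, v) = u² + v²`. The even Clifford algebra of
`q ⊕ ⟨-1⟩` is the full Clifford algebra of `q`, which is the split quaternion algebra
`ℍ[ℝ, 1, 1]`, and `i ↦ diag(1, -1)`, `j ↦ !![0, 1; 1, 0]` identifies that with `M₂(ℝ)`.
-/

open scoped Quaternion

namespace CliffordAlgebra

variable {R M₁ M₂ : Type*} [CommRing R] [AddCommGroup M₁] [AddCommGroup M₂]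
  [Module R M₁] [Module R M₂] {Q₁ : QuadraticForm R M₁} {Q₂ : QuadraticForm R M₂}

theorem map_mem_even (f : Q₁ →qᵢ Q₂) {x : CliffordAlgebra Q₁} (hx : x ∈ even Q₁) :
    map f x ∈ even Q₂ := by
  induction x, hx using even_induction with
  | algebraMap r => rw [AlgHom.commutes]; exact (even Q₂).algebraMap_mem r
  | add x y _ _ ihx ihy => rw [map_add]; exact add_mem ihx ihy
  | ι_mul_ι_mul m₁ m₂ x _ ih =>
      rw [map_mul, map_mul, map_apply_ι, map_apply_ι]
      exact mul_mem (ι_mul_ι_mem_evenOdd_zero Q₂ _ _) ih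

theorem even_map_equivOfIsometry (e : Q₁.IsometryEquiv Q₂) :
    (even Q₁).map (equivOfIsometry e : CliffordAlgebra Q₁ →ₐ[R] CliffordAlgebra Q₂) =
      even Q₂ := by
  refine le_antisymm (Subalgebra.map_le.mpr fun x hx => map_mem_even _ hx) fun x hx => ?_
  exact ⟨equivOfIsometry e.symm x, map_mem_even _ hx, (equivOfIsometry e).apply_symm_apply x⟩

def evenEquivOfIsometry (e : Q₁.IsometryEquiv Q₂) : even Q₁ ≃ₐ[R] even Q₂ :=
  ((equivOfIsometry e).subalgebraMap (even Q₁)).trans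
    (Subalgebra.equivOfEq _ _ (even_map_equivOfIsometry e))

end CliffordAlgebra

namespace Matrix

variable (R : Type*) [CommRing R]

def splitQuaternionBasis : QuaternionAlgebra.Basis (Matrix (Fin 2) (Fin 2) R) (1 : R) 0 1 where
  i := !![1, 0; 0, -1]
  j := !![0, 1; 1, 0]
  k := !![0, 1; -1, 0]
  i_mul_i := by simp [one_fin_two]
  j_mul_j := by simp [one_fin_two]
  i_mul_j := by simp
  j_mul_i := by simp

theorem splitQuaternionBasis_lift (q : ℍ[R,(1 : R),0,1]) :
    (splitQuaternionBasis R).lift q =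
      !![q.re + q.imI, q.imJ + q.imK; q.imJ - q.imK, q.re - q.imI] := by
  ext i j
  fin_cases i <;> fin_cases j <;>
    simp [QuaternionAlgebra.Basis.lift, splitQuaternionBasis, algebraMap_eq_diagonal] <;> ring

end Matrix

def QuaternionAlgebra.splitEquivMatrix (K : Type*) [Field K] [NeZero (2 : K)] :
    ℍ[K,(1 : K),0,1] ≃ₐ[K] Matrix (Fin 2) (Fin 2) K :=
  { (Matrix.splitQuaternionBasis K).liftHom with
    invFun M := ⟨(M 0 0 + M 1 1) / 2, (M 0 0 - M 1 1) / 2, (M 0 1 + M 1 0) / 2,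
      (M 0 1 - M 1 0) / 2⟩
    left_inv q := by ext <;> simp [Matrix.splitQuaternionBasis_lift]
    right_inv M := by
      ext i j
      fin_cases i <;> fin_cases j <;>
        simp [Matrix.splitQuaternionBasis_lift] <;> field_simp <;> ring }

noncomputable def titsDiagonalization : (Fin 3 → ℝ) →ₗ[ℝ] (ℝ × ℝ) × ℝ where
  toFun x := ((x 0 - 3 / 2 * x 1, x 2 - x 0 - 3 / 2 * x 1), √(3 / 2) * x 1)
  map_add' x y := by ext <;> simp <;> ring
  map_smul' r x := by ext <;> simp <;> ring

theorem titsDiagonalization_injective : Function.Injective titsDiagonalization := by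
  refine (injective_iff_map_eq_zero _).mpr fun x hx => ?_
  simp only [titsDiagonalization, LinearMap.coe_mk, AddHom.coe_mk, Prod.mk_eq_zero,
    mul_eq_zero, sub_eq_zero] at hx
  obtain ⟨⟨h₀, h₂⟩, h₁ | h₁⟩ := hx
  · norm_num at h₁
  · ext i; fin_cases i <;> simp <;> linarith

theorem titsForm_equivalent {Q : QuadraticForm ℝ (Fin 3 → ℝ)}
    (hQ : ∀ x, Q x = 2 * x 0 ^ 2 + 3 * x 1 ^ 2 + x 2 ^ 2 - 2 * x 0 * x 2 - 3 * x 1 * x 2) :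
    Q.Equivalent (CliffordAlgebra.EquivEven.Q' (CliffordAlgebraQuaternion.Q (1 : ℝ) 1)) := by
  have hrank : Module.finrank ℝ (Fin 3 → ℝ) = Module.finrank ℝ ((ℝ × ℝ) × ℝ) := by simp
  refine ⟨⟨.ofInjectiveOfFinrankEq _ titsDiagonalization_injective hrank, fun x => ?_⟩⟩
  have hs : √(3 / 2 : ℝ) * √(3 / 2) = 3 / 2 := Real.mul_self_sqrt (by norm_num)
  simp only [LinearEquiv.coe_ofInjectiveOfFinrankEq, titsDiagonalization,
    CliffordAlgebra.EquivEven.Q'_apply, CliffordAlgebraQuaternion.Q_apply, hQ]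
  linear_combination (-(x 1 * x 1)) * hs

/-- For the Tits form `Q(x₁,x₂,x₃) = 2x₁² + 3x₂² + x₃² − 2x₁x₃ − 3x₂x₃` over `ℝ`
(of signature `(2,1)`), the even Clifford algebra is isomorphic as an `ℝ`-algebra to
the algebra of `2 × 2` real matrices; i.e. `C₊(Q)` is an indefinite quaternion
algebra. -/
theorem even_clifford_iso_matrix_algebra
    (Q : QuadraticForm ℝ (Fin 3 → ℝ))
    (hQ : ∀ x, Q x = 2 * x 0 ^ 2 + 3 * x 1 ^ 2 + x 2 ^ 2 - 2 * x 0 * x 2 - 3 * x 1 * x 2) :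
    Nonempty ((CliffordAlgebra.even Q) ≃ₐ[ℝ] Matrix (Fin 2) (Fin 2) ℝ) := by
  obtain ⟨e⟩ := titsForm_equivalent hQ
  exact ⟨(CliffordAlgebra.evenEquivOfIsometry e).trans <|
    (CliffordAlgebra.equivEven _).symm.trans <|
      CliffordAlgebraQuaternion.equiv.trans (QuaternionAlgebra.splitEquivMatrix ℝ)⟩
end
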